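/- arXiv:2603.19242 — 6 statements merged into one kernel-verified Lean document; each statement's English description precedes it below -/
import Mathlib

section
/- If S is a commutative semigroup, F a field of characteristic not 2, B : S × S → F a symmetric biadditive function, and f : S → F satisfies f(x+y) - f(x) - f(y) = B(x,y) for all x, y ∈ S, then there exists an additive function a : S → F such that f(x) = (1/2)·B(x,x) + a(x) for all x ∈ S. -/
theorem stmt_0 {S : Type*} [AddCommSemigroup S] {F : Type*} [Field F]
    (hchar : (2 : F) ≠ 0) (B : S → S → F) (f : S → F)
    (hBsymm : ∀ x y, B x y = B y x)
    (hBadd1 : ∀ x y z, B (x + y) z = B x z + B y z)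
    (hBadd2 : ∀ x y z, B x (y + z) = B x y + B x z)
    (hf : ∀ x y, f (x + y) - f x - f y = B x y) :
    ∃ a : S → F, (∀ x y, a (x + y) = a x + a y) ∧
      ∀ x, f x = (1 / 2) * B x x + a x := by
  refine ⟨fun x => f x - (1/2) * B x x, ?_, fun x => by ring⟩
  intro x y
  have h := hf x y
  have hB : B (x+y) (x+y) = B x x + B x y + B x y + B y y := by
    rw [hBadd1, hBadd2, hBadd2, hBsymm y x]; ring
  dsimp only
  rw [hB]
  field_simp
  linear_combination 2 * h
end

section
/- Let F be a field, S a multiplicative subsemigroup of F containing at least two distinct elements and some nonzero element, and α ∈ F fixed. If f : S → F satisfies f(xy) - f(x) - f(y) = α·x·y for all x, y ∈ S, then α = 0 and f(xy) = f(x) + f(y) for all x, y ∈ S. -/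
theorem stmt_2 {F : Type*} [Field F] (S : Subsemigroup F) (α : F) (f : S → F)
    (htwo : ∃ x y : S, (x : F) ≠ (y : F))
    (hnz : ∃ z : S, (z : F) ≠ 0)
    (hf : ∀ x y : S, f (x * y) - f x - f y = α * (x : F) * (y : F)) :
    α = 0 ∧ ∀ x y : S, f (x * y) = f x + f y := by
  obtain ⟨a, b, hab⟩ := htwo
  obtain ⟨c, hc⟩ := hnz
  have key : ∀ x y z : S, α * (x : F) * y = α * (y : F) * z := by
    intro x y z
    have h1 := hf x y
    have h2 := hf (x * y) z
    have h3 := hf y z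
    have h4 := hf x (y * z)
    have hassoc : (x * y) * z = x * (y * z) := mul_assoc x y z
    rw [hassoc] at h2
    push_cast at h1 h2 h3 h4
    linear_combination h3 + h4 - h1 - h2
  have h5 : α * (c : F) * ((a : F) - b) = 0 := by
    linear_combination key a c b
  have hα : α = 0 := by
    rcases mul_eq_zero.mp h5 with h | h
    · rcases mul_eq_zero.mp h with h | h
      · exact h
      · exact absurd h hc
    · exact absurd (sub_eq_zero.mp h) hab
  refine ⟨hα, fun x y => ?_⟩
  have := hf x y
  rw [hα] at this
  linear_combination this
end

section
/- If f : (0,∞) → ℝ satisfies f(xy) - f(x) - f(y) = α·x·y for all x, y > 0, where α is a fixed real number, then α = 0 and f is logarithmic, i.e., f(xy) = f(x) + f(y) for all x, y > 0. -/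
theorem stmt_5 (α : ℝ) (f : ℝ → ℝ)
    (hf : ∀ x y : ℝ, 0 < x → 0 < y → f (x * y) - f x - f y = α * x * y) :
    α = 0 ∧ ∀ x y : ℝ, 0 < x → 0 < y → f (x * y) = f x + f y := by
  have h1 := hf 1 1 one_pos one_pos
  have h2 := hf 1 2 one_pos two_pos
  have hα : α = 0 := by
    simp at h1 h2; linarith
  refine ⟨hα, fun x y hx hy => ?_⟩
  have := hf x y hx hy
  rw [hα] at this; linarith
end

section
/- Let G be a semigroup with identity 1 and F a field. If f, α : G → F satisfy f(xy) - f(x)·f(y) = α(xy) for all x, y ∈ G, then there exists an exponential function m : G → F (satisfying m(xy) = m(x)m(y)) such that f(x) = f(1)·m(x) and α(x) = f(1)·(1 - f(1))·m(x) for all x ∈ G. -/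
/-!
Putting `y = 1` in the equation gives `α x = f x * (1 - f 1)`; substituting this back turns the
equation into `f (x * y) * f 1 = f x * f y`. If `f 1 ≠ 0`, then `f / f 1` is multiplicative; if
`f 1 = 0`, then `f x ^ 2 = f (x * x) * f 1 = 0`, so `f` vanishes and any exponential will do.
-/

section

variable {M R : Type*} [Monoid M] [CommRing R] {f α : M → R}

lemma apply_eq_mul_one_sub_apply_one (hf : ∀ x y, f (x * y) - f x * f y = α (x * y)) (x : M) :
    α x = f x * (1 - f 1) := by
  have h := hf x 1
  rw [mul_one] at h
  linear_combination -h

lemma apply_mul_mul_apply_one (hf : ∀ x y, f (x * y) - f x * f y = α (x * y)) (x y : M) :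
    f (x * y) * f 1 = f x * f y := by
  linear_combination hf x y + apply_eq_mul_one_sub_apply_one hf (x * y)

end

lemma exists_monoidHom_eq_apply_one_mul {M F : Type*} [Monoid M] [Field F] (f : M → F)
    (hf : ∀ x y, f (x * y) * f 1 = f x * f y) : ∃ m : M →* F, ∀ x, f x = f 1 * m x := by
  by_cases h1 : f 1 = 0
  · refine ⟨1, fun x => ?_⟩
    have hsq : f x * f x = 0 := by rw [← hf, h1, mul_zero]
    rw [mul_self_eq_zero.mp hsq, h1, zero_mul]
  · refine ⟨{ toFun := fun x => f x / f 1, map_one' := div_self h1, map_mul' := ?_ }, ?_⟩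
    · intro x y
      field_simp
      exact hf x y
    · intro x
      exact (mul_div_cancel₀ (f x) h1).symm

theorem stmt_12 {G : Type*} [Monoid G] {F : Type*} [Field F] (f α : G → F)
    (hf : ∀ x y : G, f (x * y) - f x * f y = α (x * y)) :
    ∃ m : G → F, (∀ x y, m (x * y) = m x * m y) ∧
      (∀ x, f x = f 1 * m x) ∧ ∀ x, α x = f 1 * (1 - f 1) * m x := by
  obtain ⟨m, hfm⟩ := exists_monoidHom_eq_apply_one_mul f (apply_mul_mul_apply_one hf)
  refine ⟨m, map_mul m, hfm, fun x => ?_⟩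
  rw [apply_eq_mul_one_sub_apply_one hf, hfm]
  ring
end

section
/- If f, α : ℝ → ℝ satisfy f(x+y) - f(x)·f(y) = α(x+y) for all x, y ∈ ℝ, then there exists a function m : ℝ → ℝ with m(x+y) = m(x)·m(y) for all x, y, and f(x) = f(1)·m(x), α(x) = f(1)·(1 - f(1))·m(x) for all x ∈ ℝ. -/
/-!
Putting `y = 0` gives `α x = (1 - f 0) f x`, and substituting this back turns the equation into
`f x f y = f 0 f (x + y)`. If `f 0 ≠ 0`, then `m = f / f 0` is multiplicative; if `f 0 = 0`, then
`f x ^ 2 = 0`, so `f = 0` and `m = 1` works.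
-/

section

variable {M R : Type*} [AddMonoid M]

theorem apply_eq_mul_one_sub_apply_zero [CommRing R] {f α : M → R}
    (hf : ∀ x y, f (x + y) - f x * f y = α (x + y)) (x : M) :
    α x = f x * (1 - f 0) := by
  have h := hf x 0
  rw [add_zero] at h
  rw [← h]
  ring

theorem mul_eq_apply_zero_mul_apply_add [CommRing R] {f α : M → R}
    (hf : ∀ x y, f (x + y) - f x * f y = α (x + y)) (x y : M) :
    f x * f y = f 0 * f (x + y) := by
  linear_combination -apply_eq_mul_one_sub_apply_zero hf (x + y) - hf x y

theorem exists_mul_hom_of_mul_eq_apply_zero_mul_apply_add [Field R] {f : M → R}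
    (hf : ∀ x y, f x * f y = f 0 * f (x + y)) :
    ∃ m : M → R, (∀ x y, m (x + y) = m x * m y) ∧ ∀ x, f x = f 0 * m x := by
  by_cases h0 : f 0 = 0
  · have hzero (x : M) : f x = 0 := by
      simpa [h0] using hf x x
    exact ⟨fun _ => 1, fun _ _ => (mul_one 1).symm, fun x => by simp [hzero x, h0]⟩
  · refine ⟨fun x => f x / f 0, fun x y => ?_, fun x => (mul_div_cancel₀ (f x) h0).symm⟩
    field_simp
    linear_combination -hf x y

end

theorem stmt_13 (f α : ℝ → ℝ)
    (hf : ∀ x y : ℝ, f (x + y) - f x * f y = α (x + y)) :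
    ∃ m : ℝ → ℝ, (∀ x y, m (x + y) = m x * m y) ∧
      (∀ x, f x = f 0 * m x) ∧ ∀ x, α x = f 0 * (1 - f 0) * m x := by
  obtain ⟨m, hm, hfm⟩ :=
    exists_mul_hom_of_mul_eq_apply_zero_mul_apply_add (mul_eq_apply_zero_mul_apply_add hf)
  refine ⟨m, hm, hfm, fun x => ?_⟩
  rw [apply_eq_mul_one_sub_apply_zero hf, hfm]
  ring
end

section
/- Let G be a commutative group, m₁, m₂ : G → ℂ exponential functions, and α₁ ∈ ℂ. Set γ₁ = (1 + √(1-4α₁²))/2 and γ₂ = (1 - √(1-4α₁²))/2 (any fixed square root). Define f(x) = γ₁·m₁(x) + γ₂·m₂(x) and α(x) = α₁·(m₁(x) - m₂(x)). Then f(x·y) = f(x)·f(y) + α(x)·α(y) for all x, y ∈ G. -/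
theorem stmt_16 {G : Type*} [CommGroup G] (m₁ m₂ : G → ℂ)
    (hm₁ : ∀ x y, m₁ (x * y) = m₁ x * m₁ y)
    (hm₂ : ∀ x y, m₂ (x * y) = m₂ x * m₂ y)
    (α₁ s : ℂ) (hs : s ^ 2 = 1 - 4 * α₁ ^ 2)
    (γ₁ γ₂ : ℂ) (hγ₁ : γ₁ = (1 + s) / 2) (hγ₂ : γ₂ = (1 - s) / 2)
    (f α : G → ℂ)
    (hfdef : ∀ x, f x = γ₁ * m₁ x + γ₂ * m₂ x)
    (hαdef : ∀ x, α x = α₁ * (m₁ x - m₂ x)) :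
    ∀ x y : G, f (x * y) = f x * f y + α x * α y := by
  intro x y
  simp only [hfdef, hαdef, hm₁, hm₂, hγ₁, hγ₂]
  linear_combination ((m₁ x * m₂ y + m₁ y * m₂ x - m₁ x * m₁ y - m₂ x * m₂ y)/4) * hs
end
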